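/- Let m : ℝ → ℝ be measurable with 0 < c ≤ m(t) ≤ C for all t ∈ ℝ. Then the potential ω_m is well defined on ℂ and sup { |ω_m(z + i) − ω_m(z)| : z ∈ ℂ, Im z ≥ 0 } < ∞. -/

import Mathlib

/-!
Near its singularities `log*|1 - z/t|` is the logarithm of the norm of a meromorphic function of
`t`, hence locally integrable; for large `|t|` it equals `Re (log (1 - z/t) + z/t) = O(|z|² / t²)`.
So it is integrable against the bounded weight `m`. In `ω_m(z + i) - ω_m(z)` the correction terms
`Re z / t` cancel and, with `z = x + iy`, what is left is the nonnegative kernel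
`½ log (1 + (2y + 1) / ((t - x)² + y²))`. For `y ≥ 1/2` it is dominated by `2π` times the Cauchy
density of scale `y`, for `y ≤ 1/2` by `log (1 + 2 / (t - x)²)`; both majorants have integrals
bounded independently of `z`.
-/

open MeasureTheory

/-- The modified logarithm `log*|1 - z/t|`. -/
noncomputable def logStar (z : ℂ) (t : ℝ) : ℝ :=
  if 1 < |t| then Real.log (‖(1 - z / (t : ℂ))‖) + z.re / t
  else Real.log (‖(1 - z / (t : ℂ))‖)

/-- The potential `ω_γ(z) = ∫ log*|1 - z/t| γ(t) dt`. -/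
noncomputable def pot (γ : ℝ → ℝ) (z : ℂ) : ℝ :=
  ∫ t : ℝ, logStar z t * γ t

open Set Real ProbabilityTheory
open scoped Interval

lemma locallyIntegrable_of_forall_intervalIntegrable {E : Type*} [NormedAddCommGroup E]
    {μ : Measure ℝ} [NullSingletonClass μ] {f : ℝ → E} (hf : ∀ a b, IntervalIntegrable f μ a b) :
    LocallyIntegrable f μ :=
  fun x => ⟨Icc (x - 1) (x + 1), Icc_mem_nhds (by linarith) (by linarith),
    (intervalIntegrable_iff_integrableOn_Icc_of_le (by linarith)).1 (hf _ _)⟩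

lemma integrable_of_forall_intervalIntegrable_of_abs_le_div_sq {f : ℝ → ℝ}
    (hf : ∀ a b, IntervalIntegrable f volume a b) {K R : ℝ}
    (hdecay : ∀ t, R ≤ |t| → |f t| ≤ K / t ^ 2) : Integrable f := by
  refine (locallyIntegrable_of_forall_intervalIntegrable hf).integrable_of_isBigO_cocompact
    (g := fun t => (1 + t ^ 2)⁻¹) ?_ (integrable_inv_one_add_sq.integrableAtFilter _)
  refine Asymptotics.IsBigO.of_bound (2 * |K|) ?_
  filter_upwards [tendsto_norm_cocompact_atTop.eventually_ge_atTop (max R 1)] with t ht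
  rw [Real.norm_eq_abs] at ht
  have ht1 : 1 ≤ t ^ 2 := one_le_sq_iff_one_le_abs _ |>.2 ((le_max_right _ _).trans ht)
  calc ‖f t‖ ≤ K / t ^ 2 := hdecay t ((le_max_left _ _).trans ht)
    _ ≤ |K| / t ^ 2 := by gcongr; exact le_abs_self K
    _ ≤ 2 * |K| * ‖(1 + t ^ 2)⁻¹‖ := by
      rw [norm_inv, Real.norm_of_nonneg (by positivity), ← div_eq_mul_inv,
        div_le_div_iff₀ (by positivity) (by positivity)]
      nlinarith [abs_nonneg K]

lemma logStar_eq_log_norm_add (z : ℂ) (t : ℝ) :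
    logStar z t = Real.log ‖1 - z / t‖ + if 1 < |t| then z.re / t else 0 := by
  unfold logStar
  split_ifs <;> simp

lemma intervalIntegrable_logStar (z : ℂ) (a b : ℝ) :
    IntervalIntegrable (logStar z) volume a b := by
  have hmero : MeromorphicOn (fun t : ℝ => 1 - z / (t : ℂ)) [[a, b]] := fun x _ =>
    (MeromorphicAt.const 1 x).sub
      ((MeromorphicAt.const z x).div (Complex.ofRealCLM.analyticAt x).meromorphicAt)
  have hcorr : IntervalIntegrable (fun t : ℝ => if 1 < |t| then z.re / t else 0) volume a b := by
    refine (intervalIntegrable_const (c := |z.re|)).mono_fun ?_ (ae_of_all _ fun t => ?_)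
    · exact (Measurable.ite (measurableSet_lt measurable_const measurable_abs)
        (measurable_const.div measurable_id) measurable_const).aestronglyMeasurable
    · simp only [Real.norm_eq_abs, abs_abs]
      split_ifs with ht
      · rw [abs_div]
        exact div_le_self (abs_nonneg _) ht.le
      · simp
  rw [show logStar z = _ from funext (logStar_eq_log_norm_add z)]
  exact hmero.intervalIntegrable_log_norm.add hcorr

lemma abs_logStar_le {z : ℂ} {t : ℝ} (ht : 1 < |t|) (hzt : 2 * ‖z‖ ≤ |t|) :
    |logStar z t| ≤ ‖z‖ ^ 2 / t ^ 2 := by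
  set w : ℂ := z / t
  have hw : ‖w‖ = ‖z‖ / |t| := by simp [w]
  have hw2 : ‖w‖ ≤ 1 / 2 := by
    rw [hw, div_le_iff₀ (by linarith)]
    linarith
  have hlog : logStar z t = (Complex.log (1 + -w) - -w).re := by
    simp [logStar, if_pos ht, Complex.log_re, w, ← sub_eq_add_neg]
  calc |logStar z t| ≤ ‖Complex.log (1 + -w) - -w‖ := hlog ▸ Complex.abs_re_le_norm _
    _ ≤ ‖w‖ ^ 2 * (1 - ‖w‖)⁻¹ / 2 := by
      simpa using Complex.norm_log_one_add_sub_self_le (z := -w) (by rw [norm_neg]; linarith)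
    _ ≤ ‖w‖ ^ 2 * 2 / 2 := by
      gcongr
      rw [inv_le_comm₀ (by linarith) two_pos]
      linarith
    _ = ‖z‖ ^ 2 / t ^ 2 := by rw [hw, div_pow, sq_abs]; ring

lemma integrable_logStar (z : ℂ) : Integrable (logStar z) :=
  integrable_of_forall_intervalIntegrable_of_abs_le_div_sq (intervalIntegrable_logStar z)
    (R := 2 * ‖z‖ + 2) fun _ ht => abs_logStar_le (by linarith [norm_nonneg z]) (by linarith)

lemma log_norm_ofReal_sub (w : ℂ) (t : ℝ) :
    Real.log ‖(t : ℂ) - w‖ = Real.log ((t - w.re) ^ 2 + w.im ^ 2) / 2 := by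
  rw [Complex.norm_def, Real.log_sqrt (Complex.normSq_nonneg _), Complex.normSq_apply]
  simp only [Complex.sub_re, Complex.ofReal_re, Complex.sub_im, Complex.ofReal_im]
  ring_nf

lemma logStar_eq_log_norm_sub {w : ℂ} {t : ℝ} (ht : t ≠ 0) (htw : (t : ℂ) ≠ w) :
    logStar w t = Real.log ‖(t : ℂ) - w‖ - Real.log |t| + if 1 < |t| then w.re / t else 0 := by
  have h : 1 - w / t = ((t : ℂ) - w) / t := by
    have : (t : ℂ) ≠ 0 := Complex.ofReal_ne_zero.2 ht
    field_simp
  rw [logStar_eq_log_norm_add, h, norm_div, Complex.norm_real, Real.norm_eq_abs,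
    Real.log_div (norm_ne_zero_iff.2 (sub_ne_zero.2 htw)) (abs_ne_zero.2 ht)]

/-- `log |t - (z + i)| - log |t - z|` written in terms of `y = Im z` and `s = t - Re z`. -/
noncomputable def shiftKernel (y s : ℝ) : ℝ :=
  Real.log (1 + (2 * y + 1) / (s ^ 2 + y ^ 2)) / 2

lemma logStar_add_I_sub_logStar {z : ℂ} (hz : 0 ≤ z.im) {t : ℝ} (ht : t ≠ 0) (htz : t ≠ z.re) :
    logStar (z + Complex.I) t - logStar z t = shiftKernel z.im (t - z.re) := by
  have htz' : (t : ℂ) ≠ z := fun h => htz (by rw [← h, Complex.ofReal_re])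
  have htzI : (t : ℂ) ≠ z + Complex.I := fun h => by
    have := congrArg Complex.im h
    simp only [Complex.ofReal_im, Complex.add_im, Complex.I_im] at this
    linarith
  have hA : 0 < (t - z.re) ^ 2 + z.im ^ 2 := by
    have := sub_ne_zero.2 htz
    positivity
  rw [logStar_eq_log_norm_sub ht htzI, logStar_eq_log_norm_sub ht htz', log_norm_ofReal_sub,
    log_norm_ofReal_sub, shiftKernel, one_add_div hA.ne', Real.log_div (by positivity) hA.ne']
  simp only [Complex.add_re, Complex.I_re, add_zero, Complex.add_im, Complex.I_im]
  rw [show (t - z.re) ^ 2 + (z.im + 1) ^ 2 = (t - z.re) ^ 2 + z.im ^ 2 + (2 * z.im + 1) by ring]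
  ring

lemma shiftKernel_nonneg {y : ℝ} (hy : 0 ≤ y) (s : ℝ) : 0 ≤ shiftKernel y s :=
  div_nonneg (Real.log_nonneg (le_add_of_nonneg_right (by positivity))) zero_le_two

lemma shiftKernel_le_cauchyPDFReal {y : ℝ} (hy : 1 / 2 ≤ y) (s : ℝ) :
    shiftKernel y s ≤ 2 * π * cauchyPDFReal 0 y.toNNReal s := by
  have hA : 0 < s ^ 2 + y ^ 2 := by positivity
  have hu : 0 < 1 + (2 * y + 1) / (s ^ 2 + y ^ 2) := by positivity
  rw [cauchyPDFReal_def, Real.coe_toNNReal _ (by linarith), sub_zero,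
    shiftKernel, div_le_iff₀ two_pos]
  calc Real.log (1 + (2 * y + 1) / (s ^ 2 + y ^ 2)) ≤ (2 * y + 1) / (s ^ 2 + y ^ 2) := by
        linarith [Real.log_le_sub_one_of_pos hu]
    _ ≤ 4 * y / (s ^ 2 + y ^ 2) := by gcongr; linarith
    _ = 2 * π * (π⁻¹ * y * (s ^ 2 + y ^ 2)⁻¹) * 2 := by field_simp; ring

lemma shiftKernel_le_log {y s : ℝ} (hy₀ : 0 ≤ y) (hy : y ≤ 1 / 2) (hs : s ≠ 0) :
    shiftKernel y s ≤ Real.log (1 + 2 / s ^ 2) := by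
  have hlog : 0 ≤ Real.log (1 + (2 * y + 1) / (s ^ 2 + y ^ 2)) :=
    Real.log_nonneg (le_add_of_nonneg_right (by positivity))
  calc shiftKernel y s ≤ Real.log (1 + (2 * y + 1) / (s ^ 2 + y ^ 2)) := half_le_self hlog
    _ ≤ Real.log (1 + 2 / s ^ 2) := by
      gcongr
      · linarith
      · nlinarith

lemma integrable_log_one_add_two_div_sq : Integrable fun s : ℝ => Real.log (1 + 2 / s ^ 2) := by
  refine integrable_of_forall_intervalIntegrable_of_abs_le_div_sq (K := 2) (R := 0)
    (fun a b => MeromorphicOn.intervalIntegrable_log fun x _ => by fun_prop) fun s _ => ?_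
  have hu : 0 ≤ 2 / s ^ 2 := by positivity
  rw [abs_of_nonneg (Real.log_nonneg (le_add_of_nonneg_right hu))]
  linarith [Real.log_le_sub_one_of_pos (by positivity : 0 < 1 + 2 / s ^ 2)]

lemma exists_integrable_majorant_shiftKernel {y : ℝ} (hy : 0 ≤ y) :
    ∃ G : ℝ → ℝ, Integrable G ∧ ∫ s, G s ≤ max (2 * π) (∫ s, Real.log (1 + 2 / s ^ 2)) ∧
      ∀ s ≠ 0, shiftKernel y s ≤ G s := by
  rcases le_or_gt (1 / 2) y with hy' | hy'
  · refine ⟨fun s => 2 * π * cauchyPDFReal 0 y.toNNReal s,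
      (integrable_cauchyPDFReal 0).const_mul _, ?_, fun s _ => shiftKernel_le_cauchyPDFReal hy' s⟩
    rw [integral_const_mul, integral_cauchyPDFReal_eq_one 0
      (Real.toNNReal_pos.2 (by linarith)).ne', mul_one]
    exact le_max_left _ _
  · exact ⟨_, integrable_log_one_add_two_div_sq, le_max_right _ _,
      fun s hs => shiftKernel_le_log hy hy'.le hs⟩

lemma integral_shiftKernel_mul_le {y : ℝ} (hy : 0 ≤ y) (x : ℝ) {γ : ℝ → ℝ} {C : ℝ}
    (hγ : ∀ t, 0 ≤ γ t ∧ γ t ≤ C) :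
    ∫ t, shiftKernel y (t - x) * γ t ≤ C * max (2 * π) (∫ s, Real.log (1 + 2 / s ^ 2)) := by
  obtain ⟨G, hG, hG_int, hKG⟩ := exists_integrable_majorant_shiftKernel hy
  have hC : 0 ≤ C := (hγ 0).1.trans (hγ 0).2
  calc ∫ t, shiftKernel y (t - x) * γ t ≤ ∫ t, C * G (t - x) := by
        refine integral_mono_of_nonneg
          (ae_of_all _ fun t => mul_nonneg (shiftKernel_nonneg hy _) (hγ t).1)
          ((hG.comp_sub_right x).const_mul C) ?_
        filter_upwards [compl_mem_ae_iff.2 (measure_singleton x)] with t ht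
        calc shiftKernel y (t - x) * γ t ≤ shiftKernel y (t - x) * C :=
              mul_le_mul_of_nonneg_left (hγ t).2 (shiftKernel_nonneg hy _)
          _ ≤ G (t - x) * C := mul_le_mul_of_nonneg_right (hKG _ (sub_ne_zero.2 ht)) hC
          _ = C * G (t - x) := mul_comm _ _
    _ = C * ∫ s, G s := by rw [integral_const_mul, integral_sub_right_eq_self]
    _ ≤ _ := mul_le_mul_of_nonneg_left hG_int hC

lemma pot_add_I_sub_pot {γ : ℝ → ℝ} {z : ℂ} (hz : 0 ≤ z.im)
    (hz_int : Integrable fun t => logStar z t * γ t)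
    (hzI_int : Integrable fun t => logStar (z + Complex.I) t * γ t) :
    pot γ (z + Complex.I) - pot γ z = ∫ t, shiftKernel z.im (t - z.re) * γ t := by
  rw [pot, pot, ← integral_sub hzI_int hz_int]
  refine integral_congr_ae ?_
  filter_upwards [compl_mem_ae_iff.2 (measure_singleton 0),
    compl_mem_ae_iff.2 (measure_singleton z.re)] with t ht₀ htz
  rw [← sub_mul, logStar_add_I_sub_logStar hz ht₀ htz]

theorem stmt_12 (m : ℝ → ℝ) (hm : Measurable m)
    (c C : ℝ) (hc : 0 < c)
    (hbound : ∀ t : ℝ, c ≤ m t ∧ m t ≤ C) :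
    (∀ z : ℂ, Integrable (fun t : ℝ => logStar z t * m t)) ∧
    ∃ M : ℝ, ∀ z : ℂ, 0 ≤ z.im → |pot m (z + Complex.I) - pot m z| ≤ M := by
  have hm₀ : ∀ t, 0 ≤ m t := fun t => hc.le.trans (hbound t).1
  have hint : ∀ z : ℂ, Integrable (fun t => logStar z t * m t) := fun z =>
    (integrable_logStar z).mul_bdd hm.aestronglyMeasurable
      (ae_of_all _ fun t => (Real.norm_of_nonneg (hm₀ t)).trans_le (hbound t).2)
  refine ⟨hint, C * max (2 * π) (∫ s, Real.log (1 + 2 / s ^ 2)), fun z hz => ?_⟩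
  rw [pot_add_I_sub_pot hz (hint _) (hint _), abs_of_nonneg (integral_nonneg fun t =>
    mul_nonneg (shiftKernel_nonneg hz _) (hm₀ t))]
  exact integral_shiftKernel_mul_le hz z.re fun t => ⟨hm₀ t, (hbound t).2⟩
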